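/- Let n ≥ 1, let x ∈ ℝⁿ, and let μ > 0. Then the function u ↦ (1/2)·‖u − x‖₂² + μ·‖u‖₂ on ℝⁿ has a unique minimizer u*, given by the block soft-thresholding formula: u* = (max(‖x‖₂ − μ, 0)/‖x‖₂) · x if x ≠ 0, and u* = 0 if x = 0. In particular u* = 0 whenever ‖x‖₂ ≤ μ. -/

import Mathlib

/-!
Since `‖u - x‖ ≥ |‖u‖ - ‖x‖|`, the objective is bounded below by the scalar problem
`½ (r - ‖x‖)² + μ r` in `r = ‖u‖ ≥ 0`, whose minimum `max (‖x‖ - μ) 0` is attained by the soft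
threshold, a nonnegative multiple of `x`. The minimizer is unique because the objective minus
`½ ‖u‖²` is affine plus `μ ‖u‖`, hence convex: the objective is `1`-strongly convex.
-/

open Set

-- At `s = 0` this relies on `0 / 0 = 0` and `0 ≤ μ`.
theorem max_sub_zero_div_mul_self {s μ : ℝ} (hμ : 0 ≤ μ) :
    max (s - μ) 0 / s * s = max (s - μ) 0 := by
  rcases eq_or_ne s 0 with rfl | hs
  · simp [hμ]
  · exact div_mul_cancel₀ _ hs

section NormedSpace

variable {E : Type*} [NormedAddCommGroup E] [NormedSpace ℝ E] {μ : ℝ}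

noncomputable def softThreshold (μ : ℝ) (x : E) : E := (max (‖x‖ - μ) 0 / ‖x‖) • x

theorem softThreshold_eq_zero_of_norm_le {x : E} (h : ‖x‖ ≤ μ) : softThreshold μ x = 0 := by
  rw [softThreshold, max_eq_right (sub_nonpos.mpr h), zero_div, zero_smul]

theorem softThreshold_zero (μ : ℝ) : softThreshold μ (0 : E) = 0 := smul_zero _

theorem norm_softThreshold (hμ : 0 ≤ μ) (x : E) : ‖softThreshold μ x‖ = max (‖x‖ - μ) 0 := by
  rw [softThreshold, norm_smul, Real.norm_of_nonneg (by positivity),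
    max_sub_zero_div_mul_self hμ]

theorem norm_softThreshold_sub (hμ : 0 ≤ μ) (x : E) : ‖softThreshold μ x - x‖ = min ‖x‖ μ := by
  have hsub : softThreshold μ x - x = (max (‖x‖ - μ) 0 / ‖x‖ - 1) • x := by
    rw [softThreshold, sub_smul, one_smul]
  rw [hsub, norm_smul, Real.norm_eq_abs, ← abs_norm x, ← abs_mul, sub_one_mul, abs_norm,
    max_sub_zero_div_mul_self hμ]
  rcases le_total ‖x‖ μ with h | h
  · simp [max_eq_right (sub_nonpos.mpr h), min_eq_left h]
  · rw [max_eq_left (sub_nonneg.mpr h), min_eq_right h]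
    simp [hμ]

end NormedSpace

theorem half_min_sq_add_mul_max_le {s r μ : ℝ} (hr : 0 ≤ r) :
    1 / 2 * min s μ ^ 2 + μ * max (s - μ) 0 ≤ 1 / 2 * (r - s) ^ 2 + μ * r := by
  rcases le_total s μ with h | h
  · rw [min_eq_left h, max_eq_right (sub_nonpos.mpr h)]
    nlinarith
  · rw [min_eq_right h, max_eq_left (sub_nonneg.mpr h)]
    nlinarith [sq_nonneg (r - s + μ)]

section InnerProductSpace

variable {E : Type*} [NormedAddCommGroup E] [InnerProductSpace ℝ E] {μ : ℝ}

noncomputable def normProxObjective (μ : ℝ) (x u : E) : ℝ := 1 / 2 * ‖u - x‖ ^ 2 + μ * ‖u‖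

theorem isMinOn_normProxObjective_softThreshold (hμ : 0 ≤ μ) (x : E) :
    IsMinOn (normProxObjective μ x) univ (softThreshold μ x) := by
  intro u _
  have hdist : (‖u‖ - ‖x‖) ^ 2 ≤ ‖u - x‖ ^ 2 := by
    rw [← sq_abs]
    exact pow_le_pow_left₀ (abs_nonneg _) (abs_norm_sub_norm_le u x) 2
  calc normProxObjective μ x (softThreshold μ x)
      = 1 / 2 * min ‖x‖ μ ^ 2 + μ * max (‖x‖ - μ) 0 := by
        rw [normProxObjective, norm_softThreshold_sub hμ, norm_softThreshold hμ]
    _ ≤ 1 / 2 * (‖u‖ - ‖x‖) ^ 2 + μ * ‖u‖ := half_min_sq_add_mul_max_le (norm_nonneg u)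
    _ ≤ normProxObjective μ x u := by unfold normProxObjective; linarith

theorem strongConvexOn_normProxObjective (hμ : 0 ≤ μ) (x : E) :
    StrongConvexOn univ 1 (normProxObjective μ x) := by
  rw [strongConvexOn_iff_convex]
  have hconv : ConvexOn ℝ univ fun u : E ↦ -(innerₛₗ ℝ x u) + 1 / 2 * ‖x‖ ^ 2 + μ * ‖u‖ :=
    (((-innerₛₗ ℝ x).convexOn convex_univ).add_const _).add (convexOn_univ_norm.smul hμ)
  convert hconv using 2 with u
  rw [normProxObjective, norm_sub_sq_real, innerₛₗ_apply_apply, real_inner_comm]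
  ring

theorem eq_softThreshold_of_isMinOn (hμ : 0 ≤ μ) {x u : E}
    (hu : IsMinOn (normProxObjective μ x) univ u) : u = softThreshold μ x :=
  ((strongConvexOn_normProxObjective hμ x).strictConvexOn one_pos).eq_of_isMinOn hu
    (isMinOn_normProxObjective_softThreshold hμ x) (mem_univ _) (mem_univ _)

end InnerProductSpace

theorem block_soft_thresholding_prox_general
    (n : ℕ)
    (x : EuclideanSpace ℝ (Fin n)) (μ : ℝ) (hμ : 0 < μ)
    (f : EuclideanSpace ℝ (Fin n) → ℝ)
    (hf : ∀ u, f u = (1 / 2) * ‖u - x‖ ^ 2 + μ * ‖u‖)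
    (ustar : EuclideanSpace ℝ (Fin n))
    (hzero : x = 0 → ustar = 0)
    (hnonzero : x ≠ 0 → ustar = (max (‖x‖ - μ) 0 / ‖x‖) • x) :
    (∀ u, f ustar ≤ f u) ∧
    (∀ u, (∀ v, f u ≤ f v) → u = ustar) ∧
    (‖x‖ ≤ μ → ustar = 0) := by
  obtain rfl : f = normProxObjective μ x := funext hf
  obtain rfl : ustar = softThreshold μ x := by
    rcases eq_or_ne x 0 with rfl | hx
    · rw [hzero rfl, softThreshold_zero]
    · exact hnonzero hx
  refine ⟨fun u ↦ isMinOn_normProxObjective_softThreshold hμ.le x (mem_univ u),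
    fun u hu ↦ eq_softThreshold_of_isMinOn hμ.le fun v _ ↦ hu v,
    softThreshold_eq_zero_of_norm_le⟩

/-- **Block soft thresholding is the proximal operator of the Euclidean norm.**
Let `n ≥ 1`, `x ∈ ℝⁿ` and `μ > 0`.  Then `u ↦ (1/2)‖u − x‖₂² + μ‖u‖₂` has a unique
minimizer `u*`, given by `u* = (max(‖x‖₂ − μ, 0)/‖x‖₂) • x` if `x ≠ 0` and `u* = 0`
if `x = 0`; in particular `u* = 0` whenever `‖x‖₂ ≤ μ`. -/
theorem block_soft_thresholding_prox
    (n : ℕ) (hn : 1 ≤ n)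
    (x : EuclideanSpace ℝ (Fin n)) (μ : ℝ) (hμ : 0 < μ)
    (f : EuclideanSpace ℝ (Fin n) → ℝ)
    (hf : ∀ u, f u = (1 / 2) * ‖u - x‖ ^ 2 + μ * ‖u‖)
    (ustar : EuclideanSpace ℝ (Fin n))
    (hzero : x = 0 → ustar = 0)
    (hnonzero : x ≠ 0 → ustar = (max (‖x‖ - μ) 0 / ‖x‖) • x) :
    (∀ u, f ustar ≤ f u) ∧
    (∀ u, (∀ v, f u ≤ f v) → u = ustar) ∧
    (‖x‖ ≤ μ → ustar = 0) :=
  block_soft_thresholding_prox_general n x μ hμ f hf ustar hzero hnonzero
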